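/- arXiv:1902.02878 — 2 statements merged into one kernel-verified Lean document; each statement's English description precedes it below -/
import Mathlib

section
/- For c > 0 and 𝛍 ∈ ℂ, let M = [[sinh(c/2), cosh(c/2)], [−sinh(c/2), cosh(c/2)]], J = [[0, −coth(c/2)], [tanh(c/2), 0]], and T_𝛍 = [[cosh(𝛍/2), −sinh(𝛍/2)·coth(c/2)], [−sinh(𝛍/2)·tanh(c/2), cosh(𝛍/2)]]. Then for every z in the upper half-plane (avoiding poles), the Möbius transformations satisfy M(T_𝛍(J(z))) = e^{−𝛍} · (sinh(c/2)·z − cosh(c/2)) / (sinh(c/2)·z + cosh(c/2)), and consequently M(z) · M(T_𝛍(J(z))) = −e^{−𝛍}. -/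
/-!
Away from poles the Möbius action turns matrix products into compositions, so
`M (T_μ (J z))` is the action of the single matrix `M · T_μ · J`. Since
`cosh (μ/2) ∓ sinh (μ/2) = exp (∓μ/2)`, this product is
`[[e^{-μ/2} sinh (c/2), -e^{-μ/2} cosh (c/2)], [e^{μ/2} sinh (c/2), e^{μ/2} cosh (c/2)]]`,
whose action is `e^{-μ} (sinh (c/2) z - cosh (c/2)) / (sinh (c/2) z + cosh (c/2))`;
multiplying by `M z = (sinh (c/2) z + cosh (c/2)) / (cosh (c/2) - sinh (c/2) z)` gives `-e^{-μ}`.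
-/

open Complex

noncomputable def cothC (z : ℂ) : ℂ := Complex.cosh z / Complex.sinh z

/-- Möbius action of a 2×2 complex matrix. -/
noncomputable def mobius (A : Matrix (Fin 2) (Fin 2) ℂ) (z : ℂ) : ℂ :=
  (A 0 0 * z + A 0 1) / (A 1 0 * z + A 1 1)

noncomputable def Mmat (c : ℝ) : Matrix (Fin 2) (Fin 2) ℂ :=
  !![Complex.sinh (c / 2), Complex.cosh (c / 2); -Complex.sinh (c / 2), Complex.cosh (c / 2)]

noncomputable def Jmat (c : ℝ) : Matrix (Fin 2) (Fin 2) ℂ :=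
  !![0, -cothC (c / 2); Complex.tanh (c / 2), 0]

noncomputable def Tmat (c : ℝ) (m : ℂ) : Matrix (Fin 2) (Fin 2) ℂ :=
  !![Complex.cosh (m / 2), -Complex.sinh (m / 2) * cothC (c / 2);
     -Complex.sinh (m / 2) * Complex.tanh (c / 2), Complex.cosh (m / 2)]

theorem mul_apply_mobius_denom (A B : Matrix (Fin 2) (Fin 2) ℂ) {z : ℂ}
    (hB : B 1 0 * z + B 1 1 ≠ 0) (i : Fin 2) :
    (A * B) i 0 * z + (A * B) i 1 = (A i 0 * mobius B z + A i 1) * (B 1 0 * z + B 1 1) := by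
  simp only [mobius, Matrix.mul_apply, Fin.sum_univ_two]
  field_simp
  ring

/-- Only the inner denominator has to be nonzero: if the outer one vanishes, so does the
denominator of `A * B`, and both sides are `0` by the convention `x / 0 = 0`. -/
theorem mobius_mul {A B : Matrix (Fin 2) (Fin 2) ℂ} {z : ℂ}
    (hB : B 1 0 * z + B 1 1 ≠ 0) :
    mobius (A * B) z = mobius A (mobius B z) := by
  rw [mobius, mul_apply_mobius_denom A B hB 0, mul_apply_mobius_denom A B hB 1,
    mul_div_mul_right _ _ hB]
  rfl

theorem sinh_half_ne_zero {c : ℝ} (hc : c ≠ 0) : Complex.sinh (c / 2) ≠ 0 := by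
  exact_mod_cast Real.sinh_ne_zero.mpr (div_ne_zero hc two_ne_zero)

theorem cosh_half_ne_zero (c : ℝ) : Complex.cosh (c / 2) ≠ 0 := by
  exact_mod_cast (Real.cosh_pos (c / 2)).ne'

theorem Mmat_mul_Tmat_mul_Jmat {c : ℝ} (hc : c ≠ 0) (m : ℂ) :
    Mmat c * (Tmat c m * Jmat c) =
      !![Complex.exp (-m / 2) * Complex.sinh (c / 2), -Complex.exp (-m / 2) * Complex.cosh (c / 2);
         Complex.exp (m / 2) * Complex.sinh (c / 2), Complex.exp (m / 2) * Complex.cosh (c / 2)] := by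
  have hs := sinh_half_ne_zero hc
  have hk := cosh_half_ne_zero c
  rw [neg_div, ← Complex.cosh_sub_sinh, ← Complex.cosh_add_sinh]
  simp only [Mmat, Tmat, Jmat, cothC, Complex.tanh_eq_sinh_div_cosh, Matrix.mul_fin_two]
  congrm !![?_, ?_; ?_, ?_] <;> field_simp <;> ring

theorem mobius_Mmat_mul_Tmat_mul_Jmat {c : ℝ} (hc : c ≠ 0) (m z : ℂ) :
    mobius (Mmat c * (Tmat c m * Jmat c)) z =
      Complex.exp (-m) * (Complex.sinh (c / 2) * z - Complex.cosh (c / 2)) /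
        (Complex.sinh (c / 2) * z + Complex.cosh (c / 2)) := by
  rw [Mmat_mul_Tmat_mul_Jmat hc, mobius]
  simp only [Matrix.of_apply, Matrix.cons_val', Matrix.cons_val_zero, Matrix.cons_val_fin_one,
    Matrix.cons_val_one]
  calc _ = Complex.exp (-m / 2) * (Complex.sinh (c / 2) * z - Complex.cosh (c / 2)) /
        (Complex.exp (m / 2) * (Complex.sinh (c / 2) * z + Complex.cosh (c / 2))) := by
          congr 1 <;> ring
    _ = _ := by
      rw [mul_div_mul_comm, ← Complex.exp_sub, mul_div_assoc]
      ring_nf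

theorem stmt5_general (c : ℝ) (hc : 0 < c) (m : ℂ) (z : ℂ)
    (h0 : z ≠ 0)
    (hT : Tmat c m 1 0 * mobius (Jmat c) z + Tmat c m 1 1 ≠ 0)
    (hM1 : -Complex.sinh (c / 2) * z + Complex.cosh (c / 2) ≠ 0)
    (hden : Complex.sinh (c / 2) * z + Complex.cosh (c / 2) ≠ 0) :
    mobius (Mmat c) (mobius (Tmat c m) (mobius (Jmat c) z)) =
      Complex.exp (-m) * (Complex.sinh (c / 2) * z - Complex.cosh (c / 2)) /
        (Complex.sinh (c / 2) * z + Complex.cosh (c / 2)) ∧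
    mobius (Mmat c) z * mobius (Mmat c) (mobius (Tmat c m) (mobius (Jmat c) z)) =
      -Complex.exp (-m) := by
  have hJ : Jmat c 1 0 * z + Jmat c 1 1 ≠ 0 := by
    simp [Jmat, Complex.tanh_eq_sinh_div_cosh, h0, sinh_half_ne_zero hc.ne',
      cosh_half_ne_zero c]
  have hTJ : (Tmat c m * Jmat c) 1 0 * z + (Tmat c m * Jmat c) 1 1 ≠ 0 := by
    rw [mul_apply_mobius_denom _ _ hJ]
    exact mul_ne_zero hT hJ
  have hMTJ : mobius (Mmat c) (mobius (Tmat c m) (mobius (Jmat c) z)) =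
      Complex.exp (-m) * (Complex.sinh (c / 2) * z - Complex.cosh (c / 2)) /
        (Complex.sinh (c / 2) * z + Complex.cosh (c / 2)) := by
    rw [← mobius_mul hJ, ← mobius_mul hTJ, mobius_Mmat_mul_Tmat_mul_Jmat hc.ne']
  refine ⟨hMTJ, ?_⟩
  have hMz : mobius (Mmat c) z = (Complex.sinh (c / 2) * z + Complex.cosh (c / 2)) /
      (-Complex.sinh (c / 2) * z + Complex.cosh (c / 2)) := rfl
  rw [hMTJ, hMz, div_mul_div_comm, div_eq_iff (mul_ne_zero hM1 hden)]
  ring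

theorem stmt5 (c : ℝ) (hc : 0 < c) (m : ℂ) (z : ℂ) (hz : 0 < z.im)
    (h0 : z ≠ 0)
    (hT : Tmat c m 1 0 * mobius (Jmat c) z + Tmat c m 1 1 ≠ 0)
    (hM1 : -Complex.sinh (c / 2) * z + Complex.cosh (c / 2) ≠ 0)
    (hM2 : -Complex.sinh (c / 2) * mobius (Tmat c m) (mobius (Jmat c) z)
        + Complex.cosh (c / 2) ≠ 0)
    (hden : Complex.sinh (c / 2) * z + Complex.cosh (c / 2) ≠ 0) :
    mobius (Mmat c) (mobius (Tmat c m) (mobius (Jmat c) z)) =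
      Complex.exp (-m) * (Complex.sinh (c / 2) * z - Complex.cosh (c / 2)) /
        (Complex.sinh (c / 2) * z + Complex.cosh (c / 2)) ∧
    mobius (Mmat c) z * mobius (Mmat c) (mobius (Tmat c m) (mobius (Jmat c) z)) =
      -Complex.exp (-m) :=
  stmt5_general c hc m z h0 hT hM1 hden
end

section
/- For c > 0 and μ ∈ ℝ, with R_μ = [[cosh(μ/2)·coth(c/2), −sinh(μ/2)], [−sinh(μ/2), cosh(μ/2)·tanh(c/2)]], the Möbius transformation R_μ maps the point i·tanh(c/2) to the point i·coth(c/2)·(sech μ + i·tanh μ); in particular R_μ(i·tanh(c/2)) lies on the semicircle {z : |z| = coth(c/2), Im z > 0} when μ ∈ ℝ is such that sech μ > 0. -/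
open Real Complex

noncomputable def cothR (x : ℝ) : ℝ := Real.cosh x / Real.sinh x

theorem stmt12 (c μ : ℝ) (hc : 0 < c) :
    let R : Matrix (Fin 2) (Fin 2) ℂ :=
      !![(Real.cosh (μ / 2) * cothR (c / 2) : ℝ), (-Real.sinh (μ / 2) : ℝ);
         (-Real.sinh (μ / 2) : ℝ), (Real.cosh (μ / 2) * Real.tanh (c / 2) : ℝ)]
    mobius R (Complex.I * Real.tanh (c / 2)) =
      Complex.I * cothR (c / 2) * ((1 / Real.cosh μ : ℝ) + Complex.I * Real.tanh μ) ∧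
    (1 / Real.cosh μ > 0 →
      ‖mobius R (Complex.I * Real.tanh (c / 2))‖ = cothR (c / 2) ∧
      0 < (mobius R (Complex.I * Real.tanh (c / 2))).im) := by
  intro R
  have hs2 : (0:ℝ) < Real.sinh (c/2) := Real.sinh_pos_iff.2 (by linarith)
  have hc2 : (0:ℝ) < Real.cosh (c/2) := Real.cosh_pos _
  have hcm : (0:ℝ) < Real.cosh μ := Real.cosh_pos _
  have hch : (0:ℝ) < Real.cosh (μ/2) := Real.cosh_pos _
  have hcμ : Real.cosh μ = Real.cosh (μ/2)^2 + Real.sinh (μ/2)^2 := by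
    rw [show μ = μ/2 + μ/2 by ring, Real.cosh_add]; ring
  have hsμ : Real.sinh μ = 2 * Real.sinh (μ/2) * Real.cosh (μ/2) := by
    rw [show μ = μ/2 + μ/2 by ring, Real.sinh_add]; ring
  have ht : (0:ℝ) < Real.tanh (c/2) := by
    rw [Real.tanh_eq_sinh_div_cosh]; positivity
  have hden : ((-Real.sinh (μ/2) : ℝ) : ℂ) * (Complex.I * Real.tanh (c/2)) +
      ((Real.cosh (μ/2) * Real.tanh (c/2) : ℝ) : ℂ) ≠ 0 := by
    intro h
    have him := congrArg Complex.re h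
    simp only [Complex.add_re, Complex.mul_re, Complex.mul_im, Complex.I_re, Complex.I_im,
      Complex.ofReal_re, Complex.ofReal_im, Complex.zero_re] at him
    nlinarith
  have key : mobius R (Complex.I * Real.tanh (c / 2)) =
      Complex.I * cothR (c / 2) * ((1 / Real.cosh μ : ℝ) + Complex.I * Real.tanh μ) := by
    simp only [mobius, R, Matrix.cons_val', Matrix.cons_val_zero, Matrix.cons_val_one,
      Matrix.head_cons, Matrix.empty_val', Matrix.cons_val_fin_one, Matrix.head_fin_const,
      Matrix.of_apply]
    rw [div_eq_iff hden]
    have e1 : Real.tanh (c/2) = Real.sinh (c/2) / Real.cosh (c/2) := Real.tanh_eq_sinh_div_cosh _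
    have e2 : Real.tanh μ = Real.sinh μ / Real.cosh μ := Real.tanh_eq_sinh_div_cosh _
    rw [e1, e2, cothR, hcμ, hsμ]
    set a := Real.cosh (μ/2) with ha
    set b := Real.sinh (μ/2) with hb
    set p := Real.cosh (c/2) with hp
    set q := Real.sinh (c/2) with hq
    have h1 : ((p : ℂ)) ≠ 0 := by exact_mod_cast hc2.ne'
    have h2 : ((q : ℂ)) ≠ 0 := by exact_mod_cast hs2.ne'
    have h3 : ((a : ℂ)^2 + (b : ℂ)^2) ≠ 0 := by
      have : (0:ℝ) < a^2 + b^2 := by positivity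
      exact_mod_cast this.ne'
    have habC : (a:ℂ)^2 = (b:ℂ)^2 + 1 := by
      have := Real.cosh_sq (μ/2); rw [← ha, ← hb] at this; exact_mod_cast this
    push_cast
    field_simp
    linear_combination (Complex.I*(a:ℂ) + (b:ℂ)) * habC +
      (2*(a:ℂ)*(b:ℂ)^2*Complex.I + (1 - 2*(a:ℂ)^2)*(b:ℂ)) * Complex.I_sq
  refine ⟨key, fun hpos => ?_⟩
  rw [key]
  have hco : (0:ℝ) < cothR (c/2) := by rw [cothR]; positivity
  constructor
  · rw [norm_mul, norm_mul, Complex.norm_I, one_mul]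
    have habs : ‖((1 / Real.cosh μ : ℝ) : ℂ) + Complex.I * Real.tanh μ‖ = 1 := by
      rw [mul_comm Complex.I, Complex.norm_add_mul_I]
      have : (1 / Real.cosh μ) ^ 2 + Real.tanh μ ^ 2 = 1 := by
        rw [Real.tanh_eq_sinh_div_cosh]
        have h4 := Real.cosh_sq μ
        field_simp
        nlinarith
      rw [this, Real.sqrt_one]
    rw [habs, mul_one, Complex.norm_real, Real.norm_eq_abs, abs_of_pos hco]
  · simp only [Complex.mul_im, Complex.mul_re, Complex.I_re, Complex.I_im, Complex.add_re,
      Complex.add_im, Complex.ofReal_re, Complex.ofReal_im]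
    ring_nf
    rw [show c * (1/2) = c/2 by ring]
    exact mul_pos hco (inv_pos.2 hcm)
end
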